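/- Let R be a domino tableau with an even number of boxes and let c be a cycle of R. Then content(part(R)) = content(part(MT(R,c))). -/

import Mathlib

/-!
Row `r` of a Young diagram padded to an odd number `m` of rows contributes `⌊(ℓ_r + m - r)/2⌋`
to the content; as `r + (m - r)` is odd, this is the number of odd boxes in row `r` plus
`⌊(m - r)/2⌋`. Since `m` can also be read off the odd boxes, the content of a Young diagram
depends only on its set of odd boxes.

`MT(R, c)` keeps every fixed (odd) box of `R` and creates only even boxes, so it remains to see
that it is a Young diagram. Every box weakly below and to the left of a new box is already a box
of `R`. An even box `v ≠ (1,1)` of `R` with a box of `R` above it or to its right is the new box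
of `D'(k)` for a neighbour `k` of `v` chosen by comparing labels, and `v ∈ D(j) ∩ D'(k)` puts `k`
into the cycle of `j`; so `v` survives, and with it every box of `R` below or to the left of a
box of `MT(R, c)`.
-/

namespace BG

/-- The content of a partition, given as a weakly decreasing list of naturals:
reverse to increasing order `(q₁ ≤ … ≤ q_m)`, prepend a zero part if necessary
so that the number of parts is odd, and take the multiset of
`⌊(qᵢ + i - 1)/2⌋` (1-indexed). -/
def contentP (q : List ℕ) : Multiset ℕ :=
  let q₁ := q.reverse
  let q₂ := if q₁.length % 2 = 1 then q₁ else 0 :: q₁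
  ↑((List.range q₂.length).map (fun i => (q₂.getD i 0 + i) / 2))

/-- Cells of diagrams are indexed by `(row, column)` with both coordinates
at least 1; row 1 is the bottom row and column 1 is the leftmost column.
A Young set: row lengths weakly decrease from bottom to top. -/
def IsYoungSet (S : Finset (ℕ × ℕ)) : Prop :=
  (∀ p ∈ S, 1 ≤ p.1 ∧ 1 ≤ p.2) ∧
  ∀ p ∈ S, ∀ i j : ℕ, 1 ≤ i → 1 ≤ j → i ≤ p.1 → j ≤ p.2 → (i, j) ∈ S

/-- A (horizontal `1 × 2` or vertical `2 × 1`) domino. -/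
def IsDominoSet (s : Finset (ℕ × ℕ)) : Prop :=
  ∃ r c : ℕ, 1 ≤ r ∧ 1 ≤ c ∧ (s = {(r, c), (r, c + 1)} ∨ s = {(r, c), (r + 1, c)})

/-- A domino tableau with an even number of boxes: a Young diagram tiled by
dominoes labelled `0, …, n-1` such that for every `k` the union of the
dominoes with labels `< k` is a Young diagram. -/
structure DominoTableau (n : ℕ) where
  D : Fin n → Finset (ℕ × ℕ)
  domino : ∀ i, IsDominoSet (D i)
  disj : ∀ i j, i ≠ j → Disjoint (D i) (D j)
  young : ∀ k : ℕ,
    IsYoungSet ((Finset.univ.filter (fun i : Fin n => (i : ℕ) < k)).biUnion D)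

/-- The set of cells of a domino tableau. -/
def DominoTableau.cells {n : ℕ} (R : DominoTableau n) : Finset (ℕ × ℕ) :=
  Finset.univ.biUnion R.D

/-- A domino tableau with an odd number of boxes: additionally a single
`1 × 1` box labelled `0` occupies position `(1,1)`. -/
structure OddDominoTableau (n : ℕ) where
  D : Fin n → Finset (ℕ × ℕ)
  domino : ∀ i, IsDominoSet (D i)
  disj : ∀ i j, i ≠ j → Disjoint (D i) (D j)
  zero_box : ∀ i, ((1 : ℕ), (1 : ℕ)) ∉ D i
  young : ∀ k : ℕ,
    IsYoungSet (insert ((1 : ℕ), (1 : ℕ))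
      ((Finset.univ.filter (fun i : Fin n => (i : ℕ) < k)).biUnion D))

/-- The set of cells of an odd domino tableau. -/
def OddDominoTableau.cells {n : ℕ} (R : OddDominoTableau n) : Finset (ℕ × ℕ) :=
  insert ((1 : ℕ), (1 : ℕ)) (Finset.univ.biUnion R.D)

/-- The length of row `i` of a set of cells. -/
def rowLen (S : Finset (ℕ × ℕ)) (i : ℕ) : ℕ := (S.filter (fun p => p.1 = i)).card

/-- The number of rows of a set of cells. -/
def numRows (S : Finset (ℕ × ℕ)) : ℕ := S.sup Prod.fst

/-- The partition underlying a set of cells: the list of row lengths, from the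
bottom row (row 1, the longest) upwards, i.e. in weakly decreasing order. -/
def partOf (S : Finset (ℕ × ℕ)) : List ℕ :=
  (List.range (numRows S)).map (fun i => rowLen S (i + 1))

/-- The label of a square: `-1` if either coordinate is `0`, the label of its
domino if it is a square of the tableau, and `∞` (i.e. `⊤`) otherwise. -/
noncomputable def labelAt {n : ℕ} (R : DominoTableau n) (p : ℕ × ℕ) : WithTop ℤ :=
  if p.1 = 0 ∨ p.2 = 0 then ((-1 : ℤ) : WithTop ℤ)
  else if h : ∃ i : Fin n, p ∈ R.D i then (((h.choose : ℕ) : ℤ) : WithTop ℤ)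
  else ⊤

/-- The fixed box of the domino `D(k)`: its box `(i, j)` with `i + j` odd. -/
noncomputable def fixedBox {n : ℕ} (R : DominoTableau n) (k : Fin n) : ℕ × ℕ :=
  if h : ∃ q ∈ R.D k, (q.1 + q.2) % 2 = 1 then h.choose else (0, 0)

/-- The non-fixed box of the domino `D(k)`: its box `(i, j)` with `i + j` even. -/
noncomputable def varBox {n : ℕ} (R : DominoTableau n) (k : Fin n) : ℕ × ℕ :=
  if h : ∃ q ∈ R.D k, (q.1 + q.2) % 2 = 0 then h.choose else (0, 0)

/-- The domino `D'(k)`.  Let `F` be the fixed box of `D(k)`.  If the fixed box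
is the lower or the right box of `D(k)`, let `E := (F.1 - 1, F.2 + 1)` (the
square diagonally below and to the right of `F`); otherwise let
`E := (F.1 + 1, F.2 - 1)`.  `D'(k)` consists of `F` together with the box
adjacent to `E` chosen so that the configuration formed by `D'(k)` and `E`
has weakly increasing rows and strictly decreasing columns; comparing the
label `k` of `D'(k)` with the label of `E` makes this choice explicit. -/
noncomputable def Dprime {n : ℕ} (R : DominoTableau n) (k : Fin n) : Finset (ℕ × ℕ) :=
  let F := fixedBox R k
  let O := varBox R k
  if O = (F.1 + 1, F.2) ∨ O = (F.1, F.2 - 1) then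
    if (((k : ℕ) : ℤ) : WithTop ℤ) < labelAt R (F.1 - 1, F.2 + 1) then
      {F, (F.1 - 1, F.2)}
    else {F, (F.1, F.2 + 1)}
  else
    if (((k : ℕ) : ℤ) : WithTop ℤ) < labelAt R (F.1 + 1, F.2 - 1) then
      {F, (F.1, F.2 - 1)}
    else {F, (F.1 + 1, F.2)}

/-- The equivalence relation on labels generated by declaring `i ∼ j` whenever
`D(j)` and `D'(i)` share a box. -/
def cycleRel {n : ℕ} (R : DominoTableau n) : Fin n → Fin n → Prop :=
  Relation.EqvGen (fun i j => ((R.D j) ∩ (Dprime R i)).Nonempty)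

/-- A cycle of a domino tableau: an equivalence class of the above relation. -/
def IsCycle {n : ℕ} (R : DominoTableau n) (c : Finset (Fin n)) : Prop :=
  ∃ i : Fin n, ∀ j, j ∈ c ↔ cycleRel R i j

/-- The cells of `MT(R, c)`: replace `D(k)` by `D'(k)` for every `k ∈ c`,
adding a box (labeled `0`) in position `(1,1)` if the box in position `(1,1)`
was removed. -/
noncomputable def MTcells {n : ℕ} (R : DominoTableau n) (c : Finset (Fin n)) :
    Finset (ℕ × ℕ) :=
  let S := ((Finset.univ \ c).biUnion R.D) ∪ c.biUnion (fun i => Dprime R i)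
  if ((1, 1) ∈ R.cells ∧ (1, 1) ∉ S) then insert (1, 1) S else S

lemma card_filter_Icc_mod_two (L i : ℕ) :
    ((Finset.Icc 1 L).filter (fun j => j % 2 = i % 2)).card = (L + i % 2) / 2 := by
  induction L with
  | zero => simp
  | succ L ih =>
    rw [← Finset.insert_Icc_right_eq_Icc_add_one (by omega), Finset.filter_insert]
    split_ifs with h
    · rw [Finset.card_insert_of_notMem (by simp), ih]; omega
    · rw [ih]; omega

def oddCells (S : Finset (ℕ × ℕ)) : Finset (ℕ × ℕ) :=
  S.filter (fun p => (p.1 + p.2) % 2 = 1)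

lemma rowLen_eq_zero_of_numRows_lt {S : Finset (ℕ × ℕ)} {r : ℕ} (h : numRows S < r) :
    rowLen S r = 0 :=
  Finset.card_eq_zero.mpr <| Finset.filter_eq_empty_iff.mpr fun _ hp hpr =>
    (Finset.le_sup (f := Prod.fst) hp).not_gt (hpr ▸ h)

lemma reverse_partOf (S : Finset (ℕ × ℕ)) :
    (partOf S).reverse = (List.range (numRows S)).map fun i => rowLen S (numRows S - i) := by
  apply List.ext_getElem (by simp [partOf])
  intro i h₁ h₂
  simp only [partOf, List.getElem_reverse, List.getElem_map, List.getElem_range, List.length_map,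
    List.length_range]
  congr 1
  simp only [partOf, List.length_reverse, List.length_map, List.length_range] at h₁
  omega

/-- Padding `part(S)` with a zero part gives `m = 2⌊N/2⌋ + 1` parts, `N` the number of rows. -/
lemma contentP_partOf (S : Finset (ℕ × ℕ)) :
    contentP (partOf S) =
      ((List.range (2 * (numRows S / 2) + 1)).map
        fun i => (rowLen S (2 * (numRows S / 2) + 1 - i) + i) / 2 : Multiset ℕ) := by
  set m := 2 * (numRows S / 2) + 1
  have hpad : (if (partOf S).reverse.length % 2 = 1 then (partOf S).reverse
      else 0 :: (partOf S).reverse) = (List.range m).map fun i => rowLen S (m - i) := by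
    rw [reverse_partOf]
    simp only [List.length_map, List.length_range]
    split_ifs with h
    · rw [show m = numRows S by omega]
    · rw [show m = numRows S + 1 by omega, List.range_succ_eq_map, List.map_cons, List.map_map,
        Nat.sub_zero, rowLen_eq_zero_of_numRows_lt (Nat.lt_succ_self _)]
      congr 1
      apply List.map_congr_left
      intro i _
      simp only [Function.comp_apply, Nat.succ_eq_add_one, Nat.add_sub_add_right]
  simp only [contentP, hpad, List.length_map, List.length_range]
  congr 1
  apply List.map_congr_left
  intro i hi
  rw [List.mem_range] at hi
  simp [List.getD_eq_getElem?_getD, hi]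

namespace IsYoungSet

variable {S T : Finset (ℕ × ℕ)}

lemma mem_of_le (hS : IsYoungSet S) {p q : ℕ × ℕ} (hp : p ∈ S)
    (h1 : 1 ≤ q.1) (h2 : 1 ≤ q.2) (h3 : q.1 ≤ p.1) (h4 : q.2 ≤ p.2) : q ∈ S :=
  hS.2 p hp q.1 q.2 h1 h2 h3 h4

lemma mem_iff_le_rowLen (hS : IsYoungSet S) {r j : ℕ} (hr : 1 ≤ r) (hj : 1 ≤ j) :
    (r, j) ∈ S ↔ j ≤ rowLen S r := by
  constructor
  · intro h
    have hsub : (Finset.Icc 1 j).image (Prod.mk r) ⊆ S.filter (fun p => p.1 = r) := by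
      intro p hp
      obtain ⟨j', hj', rfl⟩ := Finset.mem_image.mp hp
      rw [Finset.mem_Icc] at hj'
      exact Finset.mem_filter.mpr ⟨hS.2 _ h r j' hr hj'.1 le_rfl hj'.2, rfl⟩
    simpa [rowLen, Finset.card_image_of_injective _ (Prod.mk_right_injective r)]
      using Finset.card_le_card hsub
  · intro h
    by_contra hrj
    have hsub : S.filter (fun p => p.1 = r) ⊆ (Finset.Icc 1 (j - 1)).image (Prod.mk r) := by
      intro p hp
      obtain ⟨hpS, rfl⟩ := Finset.mem_filter.mp hp
      refine Finset.mem_image.mpr ⟨p.2, Finset.mem_Icc.mpr ⟨(hS.1 p hpS).2, ?_⟩, rfl⟩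
      by_contra hpj
      exact hrj (hS.2 p hpS _ j hr hj le_rfl (by omega))
    have := (Finset.card_le_card hsub).trans Finset.card_image_le
    simp only [Nat.card_Icc, rowLen] at this h
    omega

lemma rowLen_oddCells (hS : IsYoungSet S) {r : ℕ} (hr : 1 ≤ r) :
    rowLen (oddCells S) r =
      ((Finset.Icc 1 (rowLen S r)).filter (fun j => j % 2 = (r + 1) % 2)).card := by
  apply Finset.card_nbij' Prod.snd (Prod.mk r)
  · intro p hp
    simp only [oddCells, Finset.mem_coe, Finset.mem_filter] at hp ⊢
    obtain ⟨⟨hpS, hodd⟩, rfl⟩ := hp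
    have h1 := (hS.1 p hpS).2
    exact ⟨Finset.mem_Icc.mpr ⟨h1, (hS.mem_iff_le_rowLen hr h1).mp hpS⟩, by omega⟩
  · intro j hj
    simp only [oddCells, Finset.mem_coe, Finset.mem_filter, Finset.mem_Icc] at hj ⊢
    exact ⟨⟨(hS.mem_iff_le_rowLen hr hj.1.1).mpr hj.1.2, by omega⟩, trivial⟩
  · intro p hp
    simp only [oddCells, Finset.mem_coe, Finset.mem_filter] at hp
    exact Prod.ext hp.2.symm rfl
  · intro j _
    rfl

lemma rowLen_add_div_two (hS : IsYoungSet S) {r i : ℕ} (hr : 1 ≤ r)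
    (hri : (r + i) % 2 = 1) : (rowLen S r + i) / 2 = rowLen (oddCells S) r + i / 2 := by
  rw [hS.rowLen_oddCells hr, card_filter_Icc_mod_two]
  omega

lemma mem_column_one (hS : IsYoungSet S) {r : ℕ} (hr : 1 ≤ r) (hrN : r ≤ numRows S) :
    (r, 1) ∈ S := by
  have hne : S.Nonempty :=
    Finset.nonempty_iff_ne_empty.mpr (by rintro rfl; simp [numRows] at hrN; omega)
  obtain ⟨p, hp, hsup⟩ := Finset.exists_mem_eq_sup S hne Prod.fst
  exact hS.2 p hp r 1 hr le_rfl (hsup ▸ hrN) (hS.1 p hp).2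

lemma numRows_oddCells_div_two (hS : IsYoungSet S) :
    numRows (oddCells S) / 2 = numRows S / 2 := by
  have hle : numRows (oddCells S) ≤ numRows S := Finset.sup_mono (Finset.filter_subset _ S)
  rcases Nat.lt_or_ge (numRows S) 2 with hN | hN
  · omega
  have hmem : (2 * (numRows S / 2), 1) ∈ oddCells S :=
    Finset.mem_filter.mpr ⟨hS.mem_column_one (by omega) (by omega), by omega⟩
  have := Finset.le_sup (f := Prod.fst) hmem
  simp only [numRows] at *
  omega

lemma contentP_partOf_eq_oddCells (hS : IsYoungSet S) :
    contentP (partOf S) =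
      ((List.range (2 * (numRows (oddCells S) / 2) + 1)).map
        fun i => rowLen (oddCells S) (2 * (numRows (oddCells S) / 2) + 1 - i) + i / 2 :
        Multiset ℕ) := by
  rw [contentP_partOf, hS.numRows_oddCells_div_two]
  congr 1
  apply List.map_congr_left
  intro i hi
  rw [List.mem_range] at hi
  exact hS.rowLen_add_div_two (by omega) (by omega)

theorem contentP_partOf_eq_of_oddCells_eq (hS : IsYoungSet S) (hT : IsYoungSet T)
    (h : oddCells S = oddCells T) : contentP (partOf S) = contentP (partOf T) := by
  rw [hS.contentP_partOf_eq_oddCells, hT.contentP_partOf_eq_oddCells, h]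

end IsYoungSet

/-- `F` is the odd and `O` the even box of a domino. -/
def IsDominoPair (F O : ℕ × ℕ) : Prop :=
  (F.1 + F.2) % 2 = 1 ∧ (O.1 + O.2) % 2 = 0 ∧ 1 ≤ F.1 ∧ 1 ≤ F.2 ∧ 1 ≤ O.1 ∧ 1 ≤ O.2 ∧
    (O.1 = F.1 ∧ (O.2 = F.2 + 1 ∨ O.2 + 1 = F.2) ∨ O.2 = F.2 ∧ (O.1 = F.1 + 1 ∨ O.1 + 1 = F.1))

lemma IsDominoSet.exists_isDominoPair {s : Finset (ℕ × ℕ)} (hs : IsDominoSet s) :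
    ∃ F O, s = {F, O} ∧ IsDominoPair F O := by
  obtain ⟨r, c, hr, hc, rfl | rfl⟩ := hs
  all_goals
    rcases Nat.mod_two_eq_zero_or_one (r + c) with h | h
    · exact ⟨_, _, Finset.pair_comm _ _, by unfold IsDominoPair; omega⟩
    · exact ⟨_, _, rfl, by unfold IsDominoPair; omega⟩

/-- The box of `D'(k)` other than its fixed box. -/
noncomputable def movedBox {n : ℕ} (R : DominoTableau n) (k : Fin n) : ℕ × ℕ :=
  let F := fixedBox R k
  let O := varBox R k
  if O = (F.1 + 1, F.2) ∨ O = (F.1, F.2 - 1) then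
    if (((k : ℕ) : ℤ) : WithTop ℤ) < labelAt R (F.1 - 1, F.2 + 1) then (F.1 - 1, F.2)
    else (F.1, F.2 + 1)
  else
    if (((k : ℕ) : ℤ) : WithTop ℤ) < labelAt R (F.1 + 1, F.2 - 1) then (F.1, F.2 - 1)
    else (F.1 + 1, F.2)

namespace DominoTableau

variable {n : ℕ} {R : DominoTableau n}

variable (R) in
lemma D_eq_and_isDominoPair (k : Fin n) :
    R.D k = {fixedBox R k, varBox R k} ∧ IsDominoPair (fixedBox R k) (varBox R k) := by
  obtain ⟨F, O, hD, hFO⟩ := (R.domino k).exists_isDominoPair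
  have hodd : ∃ q ∈ R.D k, (q.1 + q.2) % 2 = 1 := ⟨F, by simp [hD], hFO.1⟩
  have heven : ∃ q ∈ R.D k, (q.1 + q.2) % 2 = 0 := ⟨O, by simp [hD], hFO.2.1⟩
  have hF : fixedBox R k = F := by
    rw [fixedBox, dif_pos hodd]
    obtain ⟨hmem, hpar⟩ := hodd.choose_spec
    generalize hodd.choose = q at hmem hpar
    rw [hD, Finset.mem_insert, Finset.mem_singleton] at hmem
    rcases hmem with rfl | rfl
    · rfl
    · unfold IsDominoPair at hFO; omega
  have hO : varBox R k = O := by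
    rw [varBox, dif_pos heven]
    obtain ⟨hmem, hpar⟩ := heven.choose_spec
    generalize heven.choose = q at hmem hpar
    rw [hD, Finset.mem_insert, Finset.mem_singleton] at hmem
    rcases hmem with rfl | rfl
    · unfold IsDominoPair at hFO; omega
    · rfl
  exact hF ▸ hO ▸ ⟨hD, hFO⟩

variable (R) in
lemma D_eq (k : Fin n) : R.D k = {fixedBox R k, varBox R k} := (R.D_eq_and_isDominoPair k).1

variable (R) in
lemma isDominoPair (k : Fin n) : IsDominoPair (fixedBox R k) (varBox R k) :=
  (R.D_eq_and_isDominoPair k).2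

variable (R) in
lemma fixedBox_mem (k : Fin n) : fixedBox R k ∈ R.D k := by simp [R.D_eq k]

variable (R) in
lemma varBox_mem (k : Fin n) : varBox R k ∈ R.D k := by simp [R.D_eq k]

lemma eq_fixedBox_of_mem {k : Fin n} {p : ℕ × ℕ} (hp : p ∈ R.D k) (hodd : (p.1 + p.2) % 2 = 1) :
    p = fixedBox R k := by
  have := R.isDominoPair k
  rw [R.D_eq k, Finset.mem_insert, Finset.mem_singleton] at hp
  rcases hp with rfl | rfl
  · rfl
  · unfold IsDominoPair at this; omega

lemma eq_varBox_of_mem {k : Fin n} {p : ℕ × ℕ} (hp : p ∈ R.D k) (heven : (p.1 + p.2) % 2 = 0) :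
    p = varBox R k := by
  have := R.isDominoPair k
  rw [R.D_eq k, Finset.mem_insert, Finset.mem_singleton] at hp
  rcases hp with rfl | rfl
  · unfold IsDominoPair at this; omega
  · rfl

lemma one_le_of_mem {k : Fin n} {p : ℕ × ℕ} (hp : p ∈ R.D k) : 1 ≤ p.1 ∧ 1 ≤ p.2 := by
  have := R.isDominoPair k
  rw [R.D_eq k, Finset.mem_insert, Finset.mem_singleton] at hp
  unfold IsDominoPair at this
  rcases hp with rfl | rfl <;> omega

lemma eq_of_mem_of_mem {i j : Fin n} {p : ℕ × ℕ} (hi : p ∈ R.D i) (hj : p ∈ R.D j) : i = j := by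
  by_contra h
  exact Finset.disjoint_left.mp (R.disj i j h) hi hj

variable (R) in
lemma mem_cells_iff (p : ℕ × ℕ) : p ∈ R.cells ↔ ∃ i, p ∈ R.D i := by
  simp [DominoTableau.cells]

lemma mem_cells_of_mem {k : Fin n} {p : ℕ × ℕ} (hp : p ∈ R.D k) : p ∈ R.cells :=
  (R.mem_cells_iff p).mpr ⟨k, hp⟩

variable (R) in
lemma isYoungSet_cells : IsYoungSet R.cells := by
  have h := R.young n
  rwa [Finset.filter_true_of_mem fun i _ => i.isLt] at h

lemma exists_mem_le_of_le {i : Fin n} {p q : ℕ × ℕ} (hp : p ∈ R.D i) (h1 : 1 ≤ q.1)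
    (h2 : 1 ≤ q.2) (h3 : q.1 ≤ p.1) (h4 : q.2 ≤ p.2) : ∃ j : Fin n, j ≤ i ∧ q ∈ R.D j := by
  have hpU : p ∈ (Finset.univ.filter fun j : Fin n => (j : ℕ) < i + 1).biUnion R.D :=
    Finset.mem_biUnion.mpr ⟨i, by simp, hp⟩
  obtain ⟨j, hj, hqj⟩ := Finset.mem_biUnion.mp ((R.young (i + 1)).2 p hpU q.1 q.2 h1 h2 h3 h4)
  simp only [Finset.mem_filter, Finset.mem_univ, true_and] at hj
  exact ⟨j, Fin.le_def.mpr (by omega), hqj⟩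

lemma le_of_mem_of_le {i j : Fin n} {p q : ℕ × ℕ} (hp : p ∈ R.D i) (hq : q ∈ R.D j)
    (h1 : q.1 ≤ p.1) (h2 : q.2 ≤ p.2) : j ≤ i := by
  obtain ⟨j', hj'i, hqj'⟩ :=
    exists_mem_le_of_le hp (one_le_of_mem hq).1 (one_le_of_mem hq).2 h1 h2
  exact eq_of_mem_of_mem hq hqj' ▸ hj'i

lemma labelAt_of_mem {k : Fin n} {p : ℕ × ℕ} (hp : p ∈ R.D k) :
    labelAt R p = (((k : ℕ) : ℤ) : WithTop ℤ) := by
  have hex : ∃ i : Fin n, p ∈ R.D i := ⟨k, hp⟩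
  have := one_le_of_mem hp
  rw [labelAt, if_neg (by omega), dif_pos hex, eq_of_mem_of_mem hex.choose_spec hp]

lemma labelAt_of_coord_eq_zero {p : ℕ × ℕ} (h : p.1 = 0 ∨ p.2 = 0) :
    labelAt R p = ((-1 : ℤ) : WithTop ℤ) := by
  rw [labelAt, if_pos h]

lemma neg_one_le_labelAt (p : ℕ × ℕ) : ((-1 : ℤ) : WithTop ℤ) ≤ labelAt R p := by
  unfold labelAt
  split_ifs
  · exact le_rfl
  · exact WithTop.coe_le_coe.mpr (by omega)
  · exact le_top

lemma coord_ne_zero_of_lt_labelAt {x : WithTop ℤ} {p : ℕ × ℕ} (hx : ((-1 : ℤ) : WithTop ℤ) ≤ x)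
    (h : x < labelAt R p) : p.1 ≠ 0 ∧ p.2 ≠ 0 := by
  by_contra hp
  rw [labelAt_of_coord_eq_zero (by omega)] at h
  exact absurd hx (not_le.mpr h)

lemma exists_mem_of_labelAt_lt {p : ℕ × ℕ} {x : WithTop ℤ} (h1 : p.1 ≠ 0) (h2 : p.2 ≠ 0)
    (h : labelAt R p < x) : ∃ j, p ∈ R.D j := by
  by_contra hp
  rw [labelAt, if_neg (by omega), dif_neg hp] at h
  exact not_top_lt h

lemma not_lt_labelAt_of_mem_of_le {k : Fin n} {p q : ℕ × ℕ} (hp : p ∈ R.D k)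
    (h1 : 1 ≤ q.1) (h2 : 1 ≤ q.2) (h3 : q.1 ≤ p.1) (h4 : q.2 ≤ p.2) :
    ¬ (((k : ℕ) : ℤ) : WithTop ℤ) < labelAt R q := by
  obtain ⟨j, hjk, hq⟩ := exists_mem_le_of_le hp h1 h2 h3 h4
  rw [labelAt_of_mem hq]
  exact_mod_cast not_lt.mpr hjk

lemma labelAt_ne_of_odd {i : Fin n} {p q : ℕ × ℕ} (hp : p ∈ R.D i) (hpq : p ≠ q)
    (hpodd : (p.1 + p.2) % 2 = 1) (hqodd : (q.1 + q.2) % 2 = 1) : labelAt R p ≠ labelAt R q := by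
  rw [labelAt_of_mem hp]
  intro h
  by_cases hq0 : q.1 = 0 ∨ q.2 = 0
  · rw [labelAt_of_coord_eq_zero hq0, WithTop.coe_eq_coe] at h
    omega
  obtain ⟨j, hj⟩ := exists_mem_of_labelAt_lt (x := ⊤) (by omega) (by omega)
    (h ▸ WithTop.coe_lt_top _)
  rw [labelAt_of_mem hj, WithTop.coe_eq_coe, Nat.cast_inj, Fin.val_inj] at h
  subst h
  exact hpq ((eq_fixedBox_of_mem hp hpodd).trans (eq_fixedBox_of_mem hj hqodd).symm)

variable (R) in
lemma Dprime_eq (k : Fin n) : Dprime R k = {fixedBox R k, movedBox R k} := by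
  simp only [Dprime, movedBox]
  split_ifs <;> rfl

lemma movedBox_eq_below {k : Fin n} {a b : ℕ} (hF : fixedBox R k = (a + 1, b))
    (hO : varBox R k ≠ (a, b)) (hlt : (((k : ℕ) : ℤ) : WithTop ℤ) < labelAt R (a, b + 1)) :
    movedBox R k = (a, b) := by
  have hadj := R.isDominoPair k
  rw [hF] at hadj
  unfold IsDominoPair at hadj
  have hE := coord_ne_zero_of_lt_labelAt (WithTop.coe_le_coe.mpr (by omega)) hlt
  have hright : varBox R k ≠ (a + 1, b + 1) := fun h =>
    not_lt_labelAt_of_mem_of_le (R.varBox_mem k) (by omega) (by omega) (by rw [h]; omega)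
      (by rw [h]) hlt
  have hbranch : varBox R k = (a + 1 + 1, b) ∨ varBox R k = (a + 1, b - 1) := by
    simp only [ne_eq, Prod.ext_iff] at hO hright hadj ⊢
    omega
  simp only [movedBox, hF, Nat.add_sub_cancel, if_pos hbranch, if_pos hlt]

lemma movedBox_eq_left {k : Fin n} {a b : ℕ} (hF : fixedBox R k = (a, b + 1))
    (hO : varBox R k ≠ (a, b)) (hlt : (((k : ℕ) : ℤ) : WithTop ℤ) < labelAt R (a + 1, b)) :
    movedBox R k = (a, b) := by
  have hadj := R.isDominoPair k
  rw [hF] at hadj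
  unfold IsDominoPair at hadj
  have hE := coord_ne_zero_of_lt_labelAt (WithTop.coe_le_coe.mpr (by omega)) hlt
  have habove : varBox R k ≠ (a + 1, b + 1) := fun h =>
    not_lt_labelAt_of_mem_of_le (R.varBox_mem k) (by omega) (by omega) (by rw [h])
      (by rw [h]; omega) hlt
  have hbranch : ¬ (varBox R k = (a + 1, b + 1) ∨ varBox R k = (a, b)) := by
    simp only [ne_eq, Prod.ext_iff] at hO habove hadj ⊢
    omega
  simp only [movedBox, hF, Nat.add_sub_cancel, if_neg hbranch, if_pos hlt]

lemma movedBox_eq_right {k : Fin n} {a b : ℕ} (hF : fixedBox R k = (a, b))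
    (hO : varBox R k ≠ (a, b + 1)) (hlt : labelAt R (a - 1, b + 1) < (((k : ℕ) : ℤ) : WithTop ℤ)) :
    movedBox R k = (a, b + 1) := by
  have hadj := R.isDominoPair k
  rw [hF] at hadj
  unfold IsDominoPair at hadj
  have hbelow : varBox R k ≠ (a - 1, b) := by
    intro h
    obtain ⟨j, hj⟩ := exists_mem_of_labelAt_lt (by rw [h] at hadj; omega) (by omega) hlt
    have hkj := le_of_mem_of_le hj (R.varBox_mem k) (by rw [h]) (by rw [h]; omega)
    rw [labelAt_of_mem hj] at hlt
    exact absurd hkj (not_le.mpr (by exact_mod_cast hlt))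
  have hbranch : varBox R k = (a + 1, b) ∨ varBox R k = (a, b - 1) := by
    simp only [ne_eq, Prod.ext_iff] at hO hbelow hadj ⊢
    omega
  simp only [movedBox, hF, if_pos hbranch, if_neg (lt_asymm hlt)]

lemma movedBox_eq_above {k : Fin n} {a b : ℕ} (hF : fixedBox R k = (a, b))
    (hO : varBox R k ≠ (a + 1, b)) (hlt : labelAt R (a + 1, b - 1) < (((k : ℕ) : ℤ) : WithTop ℤ)) :
    movedBox R k = (a + 1, b) := by
  have hadj := R.isDominoPair k
  rw [hF] at hadj
  unfold IsDominoPair at hadj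
  have hleft : varBox R k ≠ (a, b - 1) := by
    intro h
    obtain ⟨j, hj⟩ := exists_mem_of_labelAt_lt (by omega) (by rw [h] at hadj; omega) hlt
    have hkj := le_of_mem_of_le hj (R.varBox_mem k) (by rw [h]; omega) (by rw [h])
    rw [labelAt_of_mem hj] at hlt
    exact absurd hkj (not_le.mpr (by exact_mod_cast hlt))
  have hbranch : ¬ (varBox R k = (a + 1, b) ∨ varBox R k = (a, b - 1)) := by
    simp only [ne_eq, Prod.ext_iff] at hO hleft hadj ⊢
    omega
  simp only [movedBox, hF, if_neg hbranch, if_neg (lt_asymm hlt)]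

variable (R) in
lemma movedBox_cases (k : Fin n) :
    let F := fixedBox R k
    let l : WithTop ℤ := ((k : ℕ) : ℤ)
    (movedBox R k = (F.1 - 1, F.2) ∧ l < labelAt R (F.1 - 1, F.2 + 1)) ∨
    (movedBox R k = (F.1, F.2 - 1) ∧ l < labelAt R (F.1 + 1, F.2 - 1)) ∨
    (movedBox R k = (F.1, F.2 + 1) ∧ ¬ l < labelAt R (F.1 - 1, F.2 + 1)) ∨
    (movedBox R k = (F.1 + 1, F.2) ∧ ¬ l < labelAt R (F.1 + 1, F.2 - 1)) := by
  simp only [movedBox]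
  split_ifs <;> simp_all

variable (R) in
lemma isDominoPair_movedBox (k : Fin n) : IsDominoPair (fixedBox R k) (movedBox R k) := by
  have hF := R.isDominoPair k
  unfold IsDominoPair at hF ⊢
  rcases R.movedBox_cases k with ⟨h, hlt⟩ | ⟨h, hlt⟩ | ⟨h, -⟩ | ⟨h, -⟩ <;> rw [h]
  all_goals first
    | have := coord_ne_zero_of_lt_labelAt (WithTop.coe_le_coe.mpr (by omega)) hlt
      dsimp only at this ⊢; omega
    | dsimp only; omega

lemma mem_cells_of_le_movedBox {k : Fin n} {q : ℕ × ℕ} (h1 : 1 ≤ q.1) (h2 : 1 ≤ q.2)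
    (h3 : q.1 ≤ (movedBox R k).1) (h4 : q.2 ≤ (movedBox R k).2) (hne : q ≠ movedBox R k) :
    q ∈ R.cells := by
  have hY := R.isYoungSet_cells
  have hF := mem_cells_of_mem (R.fixedBox_mem k)
  rcases R.movedBox_cases k with ⟨h, -⟩ | ⟨h, -⟩ | ⟨h, hE⟩ | ⟨h, hE⟩ <;>
    rw [h] at h3 h4 hne <;> simp only [ne_eq, Prod.ext_iff] at h3 h4 hne
  · exact hY.mem_of_le hF h1 h2 (by omega) h4
  · exact hY.mem_of_le hF h1 h2 h3 (by omega)
  · by_cases hq : q.2 ≤ (fixedBox R k).2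
    · exact hY.mem_of_le hF h1 h2 h3 hq
    obtain ⟨j, hj⟩ := exists_mem_of_labelAt_lt (x := ⊤) (by dsimp only; omega)
      (by dsimp only; omega) ((not_lt.mp hE).trans_lt (WithTop.coe_lt_top _))
    exact hY.mem_of_le (mem_cells_of_mem hj) h1 h2 (by dsimp only; omega) (by dsimp only; omega)
  · by_cases hq : q.1 ≤ (fixedBox R k).1
    · exact hY.mem_of_le hF h1 h2 hq h4
    obtain ⟨j, hj⟩ := exists_mem_of_labelAt_lt (x := ⊤) (by dsimp only; omega)
      (by dsimp only; omega) ((not_lt.mp hE).trans_lt (WithTop.coe_lt_top _))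
    exact hY.mem_of_le (mem_cells_of_mem hj) h1 h2 (by dsimp only; omega) (by dsimp only; omega)

lemma varBox_ne_of_fixedBox_ne {i j : Fin n} (h : fixedBox R j ≠ fixedBox R i) :
    varBox R j ≠ varBox R i := fun hv =>
  h (by rw [eq_of_mem_of_mem (R.varBox_mem j) (hv ▸ R.varBox_mem i)])

/-- The smaller-labelled of the boxes above and to the right of `v` moves onto `v`. -/
lemma exists_movedBox_eq_of_up {i : Fin n} {r c : ℕ} (hv : varBox R i = (r, c))
    (hFa : fixedBox R i ≠ (r + 1, c)) (hFb : fixedBox R i ≠ (r, c + 1))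
    (hup : (r + 1, c) ∈ R.cells ∨ (r, c + 1) ∈ R.cells) : ∃ k, movedBox R k = (r, c) := by
  have hpar := R.isDominoPair i
  rw [hv] at hpar
  unfold IsDominoPair at hpar
  have hne : labelAt R (r + 1, c) ≠ labelAt R (r, c + 1) := by
    rcases hup with h | h <;> obtain ⟨j, hj⟩ := (R.mem_cells_iff _).mp h
    · exact labelAt_ne_of_odd hj (by simp) (by dsimp only; omega) (by dsimp only; omega)
    · exact (labelAt_ne_of_odd hj (by simp) (by dsimp only; omega) (by dsimp only; omega)).symm
  rcases lt_or_gt_of_ne hne with hlt | hlt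
  · obtain ⟨j, hj⟩ := exists_mem_of_labelAt_lt (by simp) (by simp; omega) hlt
    have hF := (eq_fixedBox_of_mem hj (by dsimp only; omega)).symm
    rw [labelAt_of_mem hj] at hlt
    exact ⟨j, movedBox_eq_below hF (hv ▸ varBox_ne_of_fixedBox_ne (hF ▸ hFa.symm)) hlt⟩
  · obtain ⟨j, hj⟩ := exists_mem_of_labelAt_lt (by simp; omega) (by simp) hlt
    have hF := (eq_fixedBox_of_mem hj (by dsimp only; omega)).symm
    rw [labelAt_of_mem hj] at hlt
    exact ⟨j, movedBox_eq_left hF (hv ▸ varBox_ne_of_fixedBox_ne (hF ▸ hFb.symm)) hlt⟩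

/-- The larger-labelled of the boxes below and to the left of `v` moves onto `v`. -/
lemma exists_movedBox_eq_of_down {i : Fin n} {r c : ℕ} (hv : varBox R i = (r, c))
    (hFl : fixedBox R i ≠ (r, c - 1)) (hFd : fixedBox R i ≠ (r - 1, c)) (h11 : (r, c) ≠ (1, 1)) :
    ∃ k, movedBox R k = (r, c) := by
  have hpar := R.isDominoPair i
  rw [hv] at hpar
  unfold IsDominoPair at hpar
  dsimp only at hpar
  simp only [ne_eq, Prod.ext_iff] at h11
  have hmem : ∀ q : ℕ × ℕ, 1 ≤ q.1 → 1 ≤ q.2 → q.1 ≤ r → q.2 ≤ c → ∃ j, q ∈ R.D j :=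
    fun q h1 h2 h3 h4 => (R.mem_cells_iff q).mp <| R.isYoungSet_cells.mem_of_le
      (mem_cells_of_mem (hv ▸ R.varBox_mem i)) h1 h2 h3 h4
  have hne : labelAt R (r, c - 1) ≠ labelAt R (r - 1, c) := by
    by_cases hc : 2 ≤ c
    · obtain ⟨j, hj⟩ := hmem (r, c - 1) (by dsimp only; omega) (by dsimp only; omega)
        le_rfl (Nat.sub_le c 1)
      exact labelAt_ne_of_odd hj (by simp; omega) (by dsimp only; omega) (by dsimp only; omega)
    · obtain ⟨j, hj⟩ := hmem (r - 1, c) (by dsimp only; omega) (by dsimp only; omega)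
        (Nat.sub_le r 1) le_rfl
      exact (labelAt_ne_of_odd hj (by simp; omega) (by dsimp only; omega)
        (by dsimp only; omega)).symm
  rcases lt_or_gt_of_ne hne with hlt | hlt
  · have hd := coord_ne_zero_of_lt_labelAt (neg_one_le_labelAt _) hlt
    dsimp only at hd
    obtain ⟨r, rfl⟩ : ∃ r', r = r' + 1 := ⟨r - 1, by omega⟩
    simp only [Nat.add_sub_cancel] at hlt hFd hd
    obtain ⟨j, hj⟩ := hmem (r, c) (by dsimp only; omega) (by dsimp only; omega)
      (Nat.le_succ r) le_rfl
    have hF := (eq_fixedBox_of_mem hj (by dsimp only; omega)).symm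
    rw [labelAt_of_mem hj] at hlt
    exact ⟨j, movedBox_eq_above hF
      (hv ▸ varBox_ne_of_fixedBox_ne (hF ▸ hFd.symm)) hlt⟩
  · have hl := coord_ne_zero_of_lt_labelAt (neg_one_le_labelAt _) hlt
    dsimp only at hl
    obtain ⟨c, rfl⟩ : ∃ c', c = c' + 1 := ⟨c - 1, by omega⟩
    simp only [Nat.add_sub_cancel] at hlt hFl hl
    obtain ⟨j, hj⟩ := hmem (r, c) (by dsimp only; omega) (by dsimp only; omega)
      le_rfl (Nat.le_succ c)
    have hF := (eq_fixedBox_of_mem hj (by dsimp only; omega)).symm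
    rw [labelAt_of_mem hj] at hlt
    exact ⟨j, movedBox_eq_right hF
      (hv ▸ varBox_ne_of_fixedBox_ne (hF ▸ hFl.symm)) hlt⟩

lemma exists_movedBox_eq_varBox {i : Fin n} (h11 : varBox R i ≠ (1, 1))
    (hup : ((varBox R i).1 + 1, (varBox R i).2) ∈ R.cells ∨
      ((varBox R i).1, (varBox R i).2 + 1) ∈ R.cells) :
    ∃ k, movedBox R k = varBox R i := by
  have hpar := R.isDominoPair i
  unfold IsDominoPair at hpar
  rcases hv : varBox R i with ⟨r, c⟩
  rw [hv] at hpar hup h11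
  dsimp only at hpar hup
  by_cases hdir : (fixedBox R i).1 + 1 = r ∨ (fixedBox R i).2 + 1 = c
  · exact exists_movedBox_eq_of_up hv (by simp only [ne_eq, Prod.ext_iff]; omega)
      (by simp only [ne_eq, Prod.ext_iff]; omega) hup
  · exact exists_movedBox_eq_of_down hv (by simp only [ne_eq, Prod.ext_iff]; omega)
      (by simp only [ne_eq, Prod.ext_iff]; omega) h11

end DominoTableau

section MT

open DominoTableau

variable {n : ℕ} {R : DominoTableau n} {c : Finset (Fin n)}

lemma mem_MTcells_iff {p : ℕ × ℕ} : p ∈ MTcells R c ↔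
    (∃ j ∉ c, p ∈ R.D j) ∨ (∃ k ∈ c, p ∈ Dprime R k) ∨ (p = (1, 1) ∧ (1, 1) ∈ R.cells) := by
  simp only [MTcells]
  split_ifs with h
  · simp only [Finset.mem_insert, Finset.mem_union, Finset.mem_biUnion, Finset.mem_sdiff,
      Finset.mem_univ, true_and]
    grind
  · simp only [Finset.mem_union, Finset.mem_biUnion, Finset.mem_sdiff, Finset.mem_univ, true_and]
    grind

lemma mem_MTcells_cases {p : ℕ × ℕ} (hp : p ∈ MTcells R c) :
    p ∈ R.cells ∨ ∃ k, p = movedBox R k := by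
  rcases mem_MTcells_iff.mp hp with ⟨j, -, hj⟩ | ⟨k, -, hk⟩ | ⟨rfl, h⟩
  · exact Or.inl (mem_cells_of_mem hj)
  · rw [R.Dprime_eq k, Finset.mem_insert, Finset.mem_singleton] at hk
    rcases hk with rfl | rfl
    · exact Or.inl (mem_cells_of_mem (R.fixedBox_mem k))
    · exact Or.inr ⟨k, rfl⟩
  · exact Or.inl h

lemma IsCycle.mem_of_inter_nonempty (hc : IsCycle R c) {j k : Fin n} (hj : j ∈ c)
    (h : (R.D j ∩ Dprime R k).Nonempty) : k ∈ c := by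
  obtain ⟨i, hi⟩ := hc
  rw [hi] at hj ⊢
  exact hj.trans _ _ _ (.symm _ _ (.rel _ _ h))

/-- An odd box is the fixed box of its domino; an even box of a domino `D(j)`, `j ∈ c`, is covered
by some `D'(k)`, and `k` then lies in the cycle `c` of `j`. -/
lemma IsCycle.mem_MTcells (hc : IsCycle R c) {q : ℕ × ℕ} (hq : q ∈ R.cells)
    (hcond : (q.1 + q.2) % 2 = 1 ∨ q = (1, 1) ∨
      (q.1 + 1, q.2) ∈ R.cells ∨ (q.1, q.2 + 1) ∈ R.cells) :
    q ∈ MTcells R c := by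
  obtain ⟨j, hj⟩ := (R.mem_cells_iff q).mp hq
  by_cases hjc : j ∉ c
  · exact mem_MTcells_iff.mpr (Or.inl ⟨j, hjc, hj⟩)
  rw [not_not] at hjc
  by_cases hodd : (q.1 + q.2) % 2 = 1
  · refine mem_MTcells_iff.mpr (Or.inr (Or.inl ⟨j, hjc, ?_⟩))
    rw [R.Dprime_eq, eq_fixedBox_of_mem hj hodd]
    exact Finset.mem_insert_self _ _
  by_cases h11 : q = (1, 1)
  · exact mem_MTcells_iff.mpr (Or.inr (Or.inr ⟨h11, h11 ▸ hq⟩))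
  have hup := (hcond.resolve_left hodd).resolve_left h11
  have hv := eq_varBox_of_mem hj (by omega)
  obtain ⟨k, hk⟩ := exists_movedBox_eq_varBox (hv ▸ h11) (hv ▸ hup)
  have hqk : q ∈ Dprime R k := by simp [R.Dprime_eq, hk, hv]
  exact mem_MTcells_iff.mpr
    (Or.inr (Or.inl ⟨k, hc.mem_of_inter_nonempty hjc ⟨q, Finset.mem_inter.mpr ⟨hj, hqk⟩⟩, hqk⟩))

lemma mem_cells_of_le_of_mem_MTcells {p q : ℕ × ℕ} (hp : p ∈ MTcells R c) (h1 : 1 ≤ q.1)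
    (h2 : 1 ≤ q.2) (h3 : q.1 ≤ p.1) (h4 : q.2 ≤ p.2) (hq : (q.1 + q.2) % 2 = 1 ∨ q ≠ p) :
    q ∈ R.cells := by
  rcases mem_MTcells_cases hp with hpR | ⟨k, rfl⟩
  · exact R.isYoungSet_cells.mem_of_le hpR h1 h2 h3 h4
  refine mem_cells_of_le_movedBox h1 h2 h3 h4 ?_
  rcases hq with hodd | hne
  · rintro rfl
    have := (R.isDominoPair_movedBox k).2.1
    omega
  · exact hne

lemma IsCycle.isYoungSet_MTcells (hc : IsCycle R c) : IsYoungSet (MTcells R c) := by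
  refine ⟨fun p hp => ?_, fun p hp a b ha hb hap hbp => ?_⟩
  · rcases mem_MTcells_cases hp with hpR | ⟨k, rfl⟩
    · exact R.isYoungSet_cells.1 p hpR
    · have := R.isDominoPair_movedBox k
      unfold IsDominoPair at this
      omega
  by_cases hqp : (a, b) = p
  · exact hqp ▸ hp
  have hq := mem_cells_of_le_of_mem_MTcells hp ha hb hap hbp (Or.inr hqp)
  refine hc.mem_MTcells hq ?_
  by_cases hodd : (a + b) % 2 = 1
  · exact Or.inl hodd
  -- the neighbour of the even box `(a, b)` towards `p` is odd, so it is a box of `R`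
  refine Or.inr (Or.inr ?_)
  by_cases hlt : a < p.1
  · exact Or.inl (mem_cells_of_le_of_mem_MTcells hp (by dsimp only; omega) hb hlt hbp
      (Or.inl (by dsimp only; omega)))
  · have hb' : b < p.2 := by
      by_contra h
      exact hqp (Prod.ext (by omega) (by omega))
    exact Or.inr (mem_cells_of_le_of_mem_MTcells hp ha (by dsimp only; omega) hap hb'
      (Or.inl (by dsimp only; omega)))

lemma IsCycle.oddCells_MTcells (hc : IsCycle R c) : oddCells (MTcells R c) = oddCells R.cells := by
  ext p
  simp only [oddCells, Finset.mem_filter, and_congr_left_iff]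
  intro hodd
  refine ⟨fun hp => ?_, fun hp => hc.mem_MTcells hp (Or.inl hodd)⟩
  rcases mem_MTcells_cases hp with hpR | ⟨k, rfl⟩
  · exact hpR
  · have := (R.isDominoPair_movedBox k).2.1
    omega

end MT

/-- Let `R` be a domino tableau with an even number of boxes and let `c` be a
cycle of `R`.  Then `content(part(R)) = content(part(MT(R, c)))`. -/
theorem stmt14 (n : ℕ) (R : DominoTableau n) (c : Finset (Fin n))
    (hc : IsCycle R c) :
    contentP (partOf R.cells) = contentP (partOf (MTcells R c)) :=
  IsYoungSet.contentP_partOf_eq_of_oddCells_eq R.isYoungSet_cells hc.isYoungSet_MTcells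
    hc.oddCells_MTcells.symm

end BG
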